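/- Let X₀, X̃₀ ∈ 𝒮 be two initial configurations with the same position δ := δ(X₀) = δ(X̃₀) ∈ ℤ ∪ {−∞} of the rightmost infinite barrier. Fix j₀ > δ and assume condition (H1) at time 0: for all j with δ < j ≤ j₀, X̃₀(j) = X₀(j) and ∑_{i≥j} X₀(i) = ∑_{i≥j} X̃₀(i). Let (X_n) and (X̃_n) be the IBMs defined from X₀ and X̃₀ using the same i.i.d. sequence (ξ_n) of law μ. Then (H1) holds at all times n, and for all n ≥ 0 and all j with δ < j ≤ j₀ + 1: X̃_{n+1}(j) = X̃_n(j) + 1 if and only if X_{n+1}(j) = X_n(j) + 1, almost surely. -/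

import Mathlib

/-!
Which bin receives the ball is read off the tail sums alone: bin `j` grows iff
`ξ ≤ ∑_{i ≥ j-1} X i` and `ξ > ∑_{i ≥ j} X i`, and then the tail sum at `j` grows iff
`0 < ξ ≤ ∑_{i ≥ j-1} X i`. Under (H1) the two configurations have the same tail sums at every
`j ≤ j₀ + 1`: left of the common barrier `δ` both are infinite, on `⟦δ+1, j₀⟧` they agree by
assumption, and at `j₀ + 1` they follow by cancelling the common finite bin `j₀`. So both chains
add their ball to the same bin whenever that bin is at most `j₀ + 1`, which propagates (H1).
The coupling holds for every realisation of `ξ`, in particular almost surely.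
-/

open MeasureTheory ProbabilityTheory Filter Set
open scoped ENNReal Topology Classical

noncomputable section

/-- A configuration of balls: the number of balls (in `ℤ₊ ∪ {∞}`) in each bin. -/
abbrev Config := ℤ → ℕ∞

/-- A valid configuration: the support is nonempty and bounded above. -/
def IsConfig (X : Config) : Prop :=
  (∃ j, X j ≠ 0) ∧ ∃ M : ℤ, ∀ j, X j ≠ 0 → j ≤ M

/-- `tailSum X j = ∑_{i ≥ j} X i`. -/
def tailSum (X : Config) (j : ℤ) : ℕ∞ :=
  ⨆ m : ℤ, ∑ i ∈ Finset.Icc j m, X i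

/-- One step of the infinite-bin model dynamics: `Phi ξ X` adds one ball to the bin
immediately to the right of the bin containing the `ξ`-th rightmost ball of `X`
(i.e. to bin `B(X,ξ) + 1` where `B(X,ξ) = sup {j : ∑_{i ≥ j} X i ≥ ξ}`), and does
nothing when `B(X,ξ) = -∞`, i.e. when no bin `j` satisfies `∑_{i ≥ j} X i ≥ ξ`. -/
def Phi (ξ : ℕ) (X : Config) : Config := fun j =>
  X j + (if (ξ : ℕ∞) ≤ tailSum X (j - 1) ∧ ¬ (ξ : ℕ∞) ≤ tailSum X j then 1 else 0)

/-- The infinite-bin model driven by the sequence `ξ`, started from `X₀`: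
`X_{n+1} = Phi (ξ n) X_n`. -/
def ibm (X₀ : Config) (ξ : ℕ → ℕ) : ℕ → Config
  | 0 => X₀
  | n + 1 => Phi (ξ n) (ibm X₀ ξ n)

/-- `X_∞(k)`: the limit (= supremum, by monotonicity) of the number of balls in bin `k`. -/
def ibmLimit (X₀ : Config) (ξ : ℕ → ℕ) (k : ℤ) : ℕ∞ :=
  ⨆ n, ibm X₀ ξ n k

/-- `ξ` is a sequence of i.i.d. random variables with law `μ` on `(Ω, P)`. -/
def IsIIDSeq {Ω : Type*} [MeasurableSpace Ω] (P : Measure Ω) (μ : Measure ℕ)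
    (ξ : ℕ → Ω → ℕ) : Prop :=
  (∀ n, Measurable (ξ n)) ∧
    iIndepFun ξ P ∧ ∀ n, P.map (ξ n) = μ

/-- The barrier configuration `X̂₀`: an infinite bin at `0`, all other bins empty. -/
def barrier : Config := fun j => if j = 0 then ⊤ else 0

/-- The tail `μ̄(j) = μ({j, j+1, ...})` of a distribution on `ℕ`. -/
def tailμ (μ : Measure ℕ) (j : ℕ) : ℝ≥0∞ := μ {i | j ≤ i}

/-- `μ` (represented by the i.i.d. driving sequence `ξ` on `(Ω, P)`) is of type `d`:
almost surely, `d = inf {k ≥ 1 : X̂_∞(k) < ∞}` for the IBM started from the barrier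
configuration (with `inf ∅ = ∞` in `ℕ ∪ {∞}`). -/
def IsTypeOf {Ω : Type*} [MeasurableSpace Ω] (P : Measure Ω) (ξ : ℕ → Ω → ℕ)
    (d : ℕ∞) : Prop :=
  ∀ᵐ ω ∂P, sInf {k : ℕ∞ | ∃ m : ℕ, 1 ≤ m ∧ k = (m : ℕ∞) ∧
    ibmLimit barrier (fun i => ξ i ω) (m : ℤ) < ⊤} = d

/-- `δ ∈ ℤ ∪ {-∞}` is the position `δ(X) = sup {j : X j = ∞}` of the rightmost
infinite bin ("barrier") of `X`, with `sup ∅ = -∞ = ⊥`. -/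
def IsRightmostBarrier (X : Config) (δ : WithBot ℤ) : Prop :=
  (∀ j : ℤ, X j = ⊤ → (j : WithBot ℤ) ≤ δ) ∧
    (∀ j : ℤ, (j : WithBot ℤ) ≤ δ → ∃ i : ℤ, j ≤ i ∧ X i = ⊤)

end

lemma sum_Icc_ite_frontier {p : ℤ → Prop} [DecidablePred p] (hp : Antitone p) (j m : ℤ) :
    ∑ i ∈ Finset.Icc j m, (if p (i - 1) ∧ ¬ p i then (1 : ℕ∞) else 0) =
      if p (j - 1) ∧ ¬ p m then 1 else 0 := by
  rcases lt_or_ge m (j - 1) with h | h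
  · rw [Finset.Icc_eq_empty_of_lt (by omega), Finset.sum_empty, if_neg]
    exact fun hc => hc.2 (hp h.le hc.1)
  induction m, h using Int.leInduction with
  | base => simp
  | succ m hm ih =>
    rw [← Finset.insert_Icc_right_eq_Icc_add_one (by omega), Finset.sum_insert (by simp), ih,
      add_sub_cancel_right]
    by_cases hm1 : p (m + 1)
    · have := hp (by omega : m ≤ m + 1) hm1
      simp [hm1, this]
    · by_cases hpm : p m
      · simp [hm1, hpm, hp hm hpm]
      · simp [hm1, hpm]

section TailSum

variable {X : Config} {j : ℤ}

lemma monotone_sum_Icc (X : Config) (j : ℤ) :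
    Monotone fun m : ℤ => ∑ i ∈ Finset.Icc j m, X i :=
  fun _ _ h => Finset.sum_le_sum_of_subset (Finset.Icc_subset_Icc_right h)

lemma tailSum_add (X Y : Config) (j : ℤ) : tailSum (X + Y) j = tailSum X j + tailSum Y j := by
  simp only [tailSum, Pi.add_apply, Finset.sum_add_distrib]
  exact (ENat.iSup_add_iSup_of_monotone (monotone_sum_Icc X j) (monotone_sum_Icc Y j)).symm

lemma tailSum_antitone (X : Config) : Antitone (tailSum X) :=
  fun _ _ h => iSup_mono fun _ => Finset.sum_le_sum_of_subset (Finset.Icc_subset_Icc_left h)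

lemma le_tailSum (X : Config) (j : ℤ) : X j ≤ tailSum X j := by
  unfold tailSum
  exact le_iSup_of_le j (by simp)

lemma tailSum_eq_top {i : ℤ} (hi : X i = ⊤) (hji : j ≤ i) : tailSum X j = ⊤ :=
  top_le_iff.mp (hi ▸ (le_tailSum X i).trans (tailSum_antitone X hji))

lemma tailSum_eq_zero_iff : tailSum X j = 0 ↔ ∀ i, j ≤ i → X i = 0 := by
  simp only [tailSum, ENat.iSup_eq_zero, Finset.sum_eq_zero_iff, Finset.mem_Icc]
  exact ⟨fun h i hi => h i i ⟨hi, le_rfl⟩, fun h _ i hi => h i hi.1⟩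

lemma tailSum_eq_add_tailSum_add_one (X : Config) (j : ℤ) :
    tailSum X j = X j + tailSum X (j + 1) := by
  rw [tailSum, tailSum, ENat.add_iSup]
  refine le_antisymm (iSup_le fun m => ?_) (iSup_le fun m => ?_)
  · rcases lt_or_ge m j with h | h
    · simp [Finset.Icc_eq_empty_of_lt h]
    · rw [← Finset.insert_Icc_add_one_left_eq_Icc h, Finset.sum_insert (by simp)]
      exact le_iSup (fun m => X j + ∑ i ∈ Finset.Icc (j + 1) m, X i) m
  · calc X j + ∑ i ∈ Finset.Icc (j + 1) m, X i
        ≤ X j + ∑ i ∈ Finset.Icc (j + 1) (max m j), X i := by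
          gcongr X j + ?_; exact monotone_sum_Icc X _ (le_max_left m j)
      _ = ∑ i ∈ Finset.Icc j (max m j), X i := by
          rw [← Finset.insert_Icc_add_one_left_eq_Icc (le_max_right m j), Finset.sum_insert (by simp)]
      _ ≤ _ := le_iSup (fun m => ∑ i ∈ Finset.Icc j m, X i) _

lemma IsConfig.exists_tailSum_eq_zero (hX : IsConfig X) :
    ∃ M : ℤ, ∀ j, M < j → tailSum X j = 0 := by
  obtain ⟨M, hM⟩ := hX.2
  exact ⟨M, fun j hj => tailSum_eq_zero_iff.mpr fun i hi => by_contra fun h => by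
    have := hM i h; omega⟩

end TailSum

section Step

variable {X : Config} {c : ℕ} {j : ℤ}

lemma tailSum_phi (c : ℕ) (X : Config) (j : ℤ) :
    tailSum (Phi c X) j = tailSum X j +
      if (c : ℕ∞) ≤ tailSum X (j - 1) ∧ ∃ m, ¬ (c : ℕ∞) ≤ tailSum X m then 1 else 0 := by
  have hp : Antitone fun i => (c : ℕ∞) ≤ tailSum X i :=
    fun _ _ h hc => hc.trans (tailSum_antitone X h)
  change tailSum (X + _) j = _
  rw [tailSum_add]
  congr 1
  rw [tailSum, iSup_congr (sum_Icc_ite_frontier hp j)]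
  split_ifs with h
  · obtain ⟨hj, m, hm⟩ := h
    exact le_antisymm (iSup_le fun _ => by split_ifs <;> simp)
      (le_iSup_of_le m (by simp [hj, hm]))
  · exact ENat.iSup_eq_zero.mpr fun m => if_neg fun h' => h ⟨h'.1, m, h'.2⟩

lemma IsConfig.tailSum_phi (hX : IsConfig X) (c : ℕ) (j : ℤ) :
    tailSum (Phi c X) j = tailSum X j +
      if (c : ℕ∞) ≤ tailSum X (j - 1) ∧ c ≠ 0 then 1 else 0 := by
  obtain ⟨M, hM⟩ := hX.exists_tailSum_eq_zero
  have hc : (∃ m, ¬ (c : ℕ∞) ≤ tailSum X m) ↔ c ≠ 0 :=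
    ⟨fun ⟨m, hm⟩ hc => hm (by simp [hc]), fun hc => ⟨M + 1, by simpa [hM (M + 1) (by omega)]⟩⟩
  simp only [_root_.tailSum_phi, hc]

lemma phi_eq_top_iff : Phi c X j = ⊤ ↔ X j = ⊤ := by
  unfold Phi
  split_ifs <;> simp

lemma phi_eq_add_one_iff (hX : X j ≠ ⊤) :
    Phi c X j = X j + 1 ↔ (c : ℕ∞) ≤ tailSum X (j - 1) ∧ ¬ (c : ℕ∞) ≤ tailSum X j := by
  unfold Phi
  split_ifs with h
  · simp [h]
  · exact iff_of_false (by rw [add_zero]; exact ((ENat.lt_add_one_iff' hX).mpr le_rfl).ne) h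

lemma IsConfig.phi (hX : IsConfig X) (c : ℕ) : IsConfig (Phi c X) := by
  obtain ⟨⟨j, hj⟩, M, hM⟩ := hX
  refine ⟨⟨j, fun h => hj (nonpos_iff_eq_zero.mp (h ▸ le_self_add))⟩, M + 1, fun i hi => ?_⟩
  by_contra! hlt
  have hXi : X i = 0 := by_contra fun h => by have := hM i h; omega
  have hT : tailSum X (i - 1) = 0 :=
    tailSum_eq_zero_iff.mpr fun k hk => by_contra fun h => by have := hM k h; omega
  simp_all [Phi]

lemma IsRightmostBarrier.phi {δ : WithBot ℤ} (h : IsRightmostBarrier X δ) (c : ℕ) :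
    IsRightmostBarrier (Phi c X) δ := by
  simpa only [IsRightmostBarrier, phi_eq_top_iff] using h

end Step

lemma IsRightmostBarrier.ne_top {X : Config} {δ : WithBot ℤ} (h : IsRightmostBarrier X δ)
    {j : ℤ} (hj : δ < j) : X j ≠ ⊤ :=
  fun hX => (h.1 j hX).not_gt hj

lemma IsRightmostBarrier.tailSum_eq_top {X : Config} {δ : WithBot ℤ}
    (h : IsRightmostBarrier X δ) {j : ℤ} (hj : (j : WithBot ℤ) ≤ δ) : tailSum X j = ⊤ :=
  let ⟨_, hji, hi⟩ := h.2 j hj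
  _root_.tailSum_eq_top hi hji

lemma IsConfig.ibm {X₀ : Config} (h : IsConfig X₀) (ξ : ℕ → ℕ) :
    ∀ n, IsConfig (ibm X₀ ξ n)
  | 0 => h
  | n + 1 => (h.ibm ξ n).phi (ξ n)

lemma IsRightmostBarrier.ibm {X₀ : Config} {δ : WithBot ℤ} (h : IsRightmostBarrier X₀ δ)
    (ξ : ℕ → ℕ) : ∀ n, IsRightmostBarrier (ibm X₀ ξ n) δ
  | 0 => h
  | n + 1 => (h.ibm ξ n).phi (ξ n)

/-- Condition (H1) on the window `⟦δ+1, j₀⟧`. -/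
def AgreeBetween (δ : WithBot ℤ) (j₀ : ℤ) (X Y : Config) : Prop :=
  ∀ j : ℤ, δ < (j : WithBot ℤ) → j ≤ j₀ → Y j = X j ∧ tailSum X j = tailSum Y j

namespace AgreeBetween

variable {δ : WithBot ℤ} {j₀ : ℤ} {X Y : Config}

lemma tailSum_eq (h : AgreeBetween δ j₀ X Y) (hX : IsRightmostBarrier X δ)
    (hY : IsRightmostBarrier Y δ) (hj₀ : δ < j₀) {j : ℤ} (hj : j ≤ j₀ + 1) :
    tailSum X j = tailSum Y j := by
  rcases le_or_gt (j : WithBot ℤ) δ with hjδ | hjδ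
  · rw [hX.tailSum_eq_top hjδ, hY.tailSum_eq_top hjδ]
  rcases lt_or_eq_of_le hj with hj | rfl
  · exact (h j hjδ (by omega)).2
  · obtain ⟨hbin, htail⟩ := h j₀ hj₀ le_rfl
    rw [tailSum_eq_add_tailSum_add_one X, tailSum_eq_add_tailSum_add_one Y, hbin] at htail
    exact WithTop.add_left_cancel (hX.ne_top hj₀) htail

lemma phi_eq_add_one_iff (h : AgreeBetween δ j₀ X Y) (hX : IsRightmostBarrier X δ)
    (hY : IsRightmostBarrier Y δ) (hj₀ : δ < j₀) {j : ℤ} (hδj : δ < j) (hj : j ≤ j₀ + 1)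
    (c : ℕ) : Phi c Y j = Y j + 1 ↔ Phi c X j = X j + 1 := by
  rw [_root_.phi_eq_add_one_iff (hY.ne_top hδj), _root_.phi_eq_add_one_iff (hX.ne_top hδj),
    h.tailSum_eq hX hY hj₀ hj, h.tailSum_eq hX hY hj₀ (by omega : j - 1 ≤ j₀ + 1)]

lemma phi (h : AgreeBetween δ j₀ X Y) (hXc : IsConfig X) (hYc : IsConfig Y)
    (hX : IsRightmostBarrier X δ) (hY : IsRightmostBarrier Y δ) (hj₀ : δ < j₀) (c : ℕ) :
    AgreeBetween δ j₀ (Phi c X) (Phi c Y) := by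
  intro j hδj hj
  have hprev := h.tailSum_eq hX hY hj₀ (by omega : j - 1 ≤ j₀ + 1)
  have hcur := h.tailSum_eq hX hY hj₀ (by omega : j ≤ j₀ + 1)
  constructor
  · simp only [Phi, (h j hδj hj).1, hprev, hcur]
  · rw [hXc.tailSum_phi, hYc.tailSum_phi, hcur, hprev]

lemma ibm (h : AgreeBetween δ j₀ X Y) (hXc : IsConfig X) (hYc : IsConfig Y)
    (hX : IsRightmostBarrier X δ) (hY : IsRightmostBarrier Y δ) (hj₀ : δ < j₀) (ξ : ℕ → ℕ) :
    ∀ n, AgreeBetween δ j₀ (_root_.ibm X ξ n) (_root_.ibm Y ξ n)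
  | 0 => h
  | n + 1 => (h.ibm hXc hYc hX hY hj₀ ξ n).phi (hXc.ibm ξ n) (hYc.ibm ξ n) (hX.ibm ξ n)
      (hY.ibm ξ n) hj₀ (ξ n)

end AgreeBetween

theorem stmt11_general {Ω : Type*} [MeasurableSpace Ω] (P : Measure Ω)
    (ξ : ℕ → Ω → ℕ)
    (X₀ Xt₀ : Config) (hX₀ : IsConfig X₀) (hXt₀ : IsConfig Xt₀)
    (δ : WithBot ℤ) (hδ : IsRightmostBarrier X₀ δ) (hδt : IsRightmostBarrier Xt₀ δ)
    (j₀ : ℤ) (hj₀ : δ < (j₀ : WithBot ℤ))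
    (hH1 : ∀ j : ℤ, δ < (j : WithBot ℤ) → j ≤ j₀ →
      Xt₀ j = X₀ j ∧ tailSum X₀ j = tailSum Xt₀ j) :
    ∀ᵐ ω ∂P, ∀ n : ℕ,
      (∀ j : ℤ, δ < (j : WithBot ℤ) → j ≤ j₀ →
        ibm Xt₀ (fun i => ξ i ω) n j = ibm X₀ (fun i => ξ i ω) n j ∧
          tailSum (ibm X₀ (fun i => ξ i ω) n) j = tailSum (ibm Xt₀ (fun i => ξ i ω) n) j) ∧
      (∀ j : ℤ, δ < (j : WithBot ℤ) → j ≤ j₀ + 1 →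
        (ibm Xt₀ (fun i => ξ i ω) (n + 1) j = ibm Xt₀ (fun i => ξ i ω) n j + 1 ↔
          ibm X₀ (fun i => ξ i ω) (n + 1) j = ibm X₀ (fun i => ξ i ω) n j + 1)) := by
  refine ae_of_all P fun ω n => ?_
  have hagree : AgreeBetween δ j₀ (ibm X₀ (fun i => ξ i ω) n) (ibm Xt₀ (fun i => ξ i ω) n) :=
    AgreeBetween.ibm hH1 hX₀ hXt₀ hδ hδt hj₀ _ n
  exact ⟨hagree, fun j hδj hj =>
    hagree.phi_eq_add_one_iff (hδ.ibm _ n) (hδt.ibm _ n) hj₀ hδj hj (ξ n ω)⟩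

/-- Coupling with the same driving sequence: if `X₀, X̃₀` have the same
rightmost barrier `δ`, `j₀ > δ`, and condition (H1) holds at time `0` (equal bin contents
and equal tails on `⟦δ+1, j₀⟧`), then almost surely (H1) holds at all times `n`, and for
all `n` and all `δ < j ≤ j₀ + 1`, bin `j` of `X̃` increments at time `n+1` iff bin `j` of
`X` does. -/
theorem stmt11 {Ω : Type*} [MeasurableSpace Ω] (P : Measure Ω) [IsProbabilityMeasure P]
    (μ : Measure ℕ) [IsProbabilityMeasure μ] (hμ0 : μ {0} = 0)
    (ξ : ℕ → Ω → ℕ) (hξ : IsIIDSeq P μ ξ)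
    (X₀ Xt₀ : Config) (hX₀ : IsConfig X₀) (hXt₀ : IsConfig Xt₀)
    (δ : WithBot ℤ) (hδ : IsRightmostBarrier X₀ δ) (hδt : IsRightmostBarrier Xt₀ δ)
    (j₀ : ℤ) (hj₀ : δ < (j₀ : WithBot ℤ))
    (hH1 : ∀ j : ℤ, δ < (j : WithBot ℤ) → j ≤ j₀ →
      Xt₀ j = X₀ j ∧ tailSum X₀ j = tailSum Xt₀ j) :
    ∀ᵐ ω ∂P, ∀ n : ℕ,
      (∀ j : ℤ, δ < (j : WithBot ℤ) → j ≤ j₀ →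
        ibm Xt₀ (fun i => ξ i ω) n j = ibm X₀ (fun i => ξ i ω) n j ∧
          tailSum (ibm X₀ (fun i => ξ i ω) n) j = tailSum (ibm Xt₀ (fun i => ξ i ω) n) j) ∧
      (∀ j : ℤ, δ < (j : WithBot ℤ) → j ≤ j₀ + 1 →
        (ibm Xt₀ (fun i => ξ i ω) (n + 1) j = ibm Xt₀ (fun i => ξ i ω) n j + 1 ↔
          ibm X₀ (fun i => ξ i ω) (n + 1) j = ibm X₀ (fun i => ξ i ω) n j + 1)) :=
  stmt11_general P ξ X₀ Xt₀ hX₀ hXt₀ δ hδ hδt j₀ hj₀ hH1
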